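/- Let T be a rooted tree with n nodes and let K ≥ 1. With cost defined as: cost(v) = 0 for leaves, and cost(v) = Σ_i cost(v_i) + Σ_{i=1}^{d_v-1} min{n_{v₁}+⋯+n_{v_i}, K}·min{n_{v_{i+1}}, K} otherwise, we have Σ over all non-leaf nodes v of Σ_{i=1}^{d_v-1} min{n_{v₁}+⋯+n_{v_i}, K}·min{n_{v_{i+1}}, K} ≤ 2Kn. -/

import Mathlib

/-- Rooted trees with an ordered list of children. -/
inductive RTree where
  | node : List RTree → RTree

mutual
/-- Number of nodes in the subtree rooted at `v` (including `v`). -/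
def RTree.size : RTree → ℕ
  | .node cs => 1 + RTree.sizeList cs
def RTree.sizeList : List RTree → ℕ
  | [] => 0
  | t :: ts => RTree.size t + RTree.sizeList ts
end

/-- Given the running prefix sum `acc` of children sizes, adds
`min(acc,K)·min(nᵢ₊₁,K)` terms for the remaining children sizes. -/
def chainGo (K : ℕ) : ℕ → List ℕ → ℕ
  | _, [] => 0
  | acc, m :: rest => min acc K * min m K + chainGo K (acc + m) rest

/-- `Σ_{i=1}^{d-1} min(n₁+⋯+nᵢ, K)·min(nᵢ₊₁, K)` for the list of children sizes. -/
def chainCost (K : ℕ) : List ℕ → ℕ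
  | [] => 0
  | n :: rest => chainGo K n rest

mutual
/-- The recursive cost function: 0 on leaves, and otherwise the sum of children costs
plus `Σ_{i=1}^{d_v-1} min(n_{v₁}+⋯+n_{vᵢ}, K)·min(n_{vᵢ₊₁}, K)`. -/
def RTree.cost (K : ℕ) : RTree → ℕ
  | .node cs => RTree.costList K cs + chainCost K (cs.map RTree.size)
def RTree.costList (K : ℕ) : List RTree → ℕ
  | [] => 0
  | t :: ts => RTree.cost K t + RTree.costList K ts
end


/-!
The potential `Φ x = m (2K − m)` with `m = min x K` pays for everything. Joining blocks of
sizes `a` and `b` costs `min a K * min b K ≤ Φ a + Φ b − Φ (a + b)`, so the chain cost at a node is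
paid by the potentials of its children minus that of their union, and adding the node itself raises
the potential by at most `2K`. By induction, `cost v + Φ n_v ≤ 2K n_v`.
-/

namespace RTree

/-- The potential `Φ`; the subtraction does not truncate since `min x K ≤ K`. -/
def potential (K x : ℕ) : ℕ := min x K * (2 * K - min x K)

variable (K : ℕ)

theorem min_mul_min_add_potential_le (a b : ℕ) :
    min a K * min b K + potential K (a + b) ≤ potential K a + potential K b := by
  unfold potential
  obtain ⟨x, hx⟩ : ∃ x, min a K = x := ⟨_, rfl⟩
  obtain ⟨y, hy⟩ : ∃ y, min b K = y := ⟨_, rfl⟩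
  obtain ⟨z, hz⟩ : ∃ z, min (a + b) K = z := ⟨_, rfl⟩
  rw [hx, hy, hz]
  have hzxy : z = x + y ∨ z = K ∧ K ≤ x + y := by omega
  zify [show x ≤ 2 * K by omega, show y ≤ 2 * K by omega, show z ≤ 2 * K by omega]
  rcases hzxy with rfl | ⟨rfl, hxy⟩
  · push_cast
    nlinarith [Nat.zero_le (x * y)]
  · -- the defect `Φ a + Φ b − Φ (a + b)` is `2xy − (x + y − K)²`, and `(x + y − K)² ≤ xy`
    nlinarith [mul_le_mul (show (x + y - z : ℤ) ≤ x by omega) (show (x + y - z : ℤ) ≤ y by omega)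
      (show (0 : ℤ) ≤ x + y - z by omega) (show (0 : ℤ) ≤ x by omega)]

theorem potential_succ_le (x : ℕ) : potential K (x + 1) ≤ potential K x + 2 * K := by
  unfold potential
  obtain ⟨m, hm⟩ : ∃ m, min x K = m := ⟨_, rfl⟩
  obtain ⟨m', hm'⟩ : ∃ m', min (x + 1) K = m' := ⟨_, rfl⟩
  rw [hm, hm']
  have hm'm : m' = m ∨ m' = m + 1 ∧ m + 1 ≤ K := by omega
  zify [show m ≤ 2 * K by omega, show m' ≤ 2 * K by omega]
  rcases hm'm with rfl | ⟨rfl, -⟩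
  · nlinarith
  · push_cast
    nlinarith

theorem chainGo_add_potential_le (ns : List ℕ) (acc : ℕ) :
    chainGo K acc ns + potential K (acc + ns.sum)
      ≤ potential K acc + (ns.map (potential K)).sum := by
  induction ns generalizing acc with
  | nil => simp [chainGo]
  | cons n ns ih =>
    have := min_mul_min_add_potential_le K acc n
    have := ih (acc + n)
    simp only [chainGo, List.sum_cons, List.map_cons, ← add_assoc]
    omega

theorem chainCost_add_potential_le (ns : List ℕ) :
    chainCost K ns + potential K ns.sum ≤ (ns.map (potential K)).sum := by
  cases ns with
  | nil => simp [chainCost, potential]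
  | cons n ns => simpa [chainCost] using chainGo_add_potential_le K ns n

theorem sizeList_eq_sum_map_size (ts : List RTree) : sizeList ts = (ts.map size).sum := by
  induction ts with
  | nil => rfl
  | cons t ts ih => simp [sizeList, ih]

mutual

theorem cost_add_potential_le : (t : RTree) → t.cost K + potential K t.size ≤ 2 * K * t.size
  | .node cs => by
    have hchildren := costList_add_potential_le cs
    have hchain := chainCost_add_potential_le K (cs.map size)
    have hroot := potential_succ_le K (sizeList cs)
    rw [← sizeList_eq_sum_map_size, List.map_map] at hchain
    simp only [cost, size, Function.comp_def] at *
    rw [add_comm 1, mul_add_one]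
    omega

theorem costList_add_potential_le : (ts : List RTree) →
    costList K ts + (ts.map (fun t => potential K t.size)).sum ≤ 2 * K * sizeList ts
  | [] => by simp [costList, sizeList]
  | t :: ts => by
    have := cost_add_potential_le t
    have := costList_add_potential_le ts
    simp only [costList, sizeList, List.map_cons, List.sum_cons, mul_add]
    omega

end

end RTree

/-- The sum over all non-leaf nodes v of
`Σ_{i=1}^{d_v-1} min(n_{v₁}+⋯+n_{vᵢ}, K)·min(n_{vᵢ₊₁}, K)` — which equals
`cost(root)` — is at most `2Kn`. -/
theorem total_local_cost_bound (K : ℕ) (hK : 1 ≤ K) (t : RTree) :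
    t.cost K ≤ 2 * K * t.size :=
  (Nat.le_add_right _ _).trans (t.cost_add_potential_le K)
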